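/- Let (G,w) be a weighted graph and Φ a continuous triangle function satisfying the standing conditions. Suppose for every cycle C ⊆ G and every edge e ∈ E(C) the inequality w(e) ≤ w_Φ(C∖e) holds. Then w is Φ-pseudosemimetrizable: there exists a Φ-pseudosemimetric d on V(G) with d(u,v) = w({u,v}) for all edges {u,v} ∈ E(G). -/

import Mathlib

/-!
The pseudosemimetric is the shortest-`Φ`-path function `dPhi`. Concatenating an `x`–`z` and a `z`–`y`
path and shortcutting it gives an `x`–`y` path whose edge multiset lies in the union of the two,
so the submultiset condition bounds its weight by `Φ` of theirs, and continuity of `Φ` passes the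
bound to the infima. For an edge `uv`, a path from `u` to `v` either contains `uv`, and weighs at
least `w(uv)` because `Φ` dominates `max`, or closes a cycle with it, where the cycle condition
applies. Distinct components are glued through chosen representatives, which plays the role of
the paper's bridges.
-/

open scoped NNReal
open SimpleGraph

/-- Iterated triangle function: `PhiStar Φ x [y₁,...,yₖ] = Φ*(x, y₁, ..., yₖ)`. -/
def PhiStar (Φ : ℝ≥0 → ℝ≥0 → ℝ≥0) : ℝ≥0 → List ℝ≥0 → ℝ≥0
  | x, [] => x
  | x, y :: l => Φ x (PhiStar Φ y l)

/-- `Φ`-weight of a (possibly empty) list of weights. -/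
def listPhi (Φ : ℝ≥0 → ℝ≥0 → ℝ≥0) : List ℝ≥0 → ℝ≥0
  | [] => 0
  | x :: l => PhiStar Φ x l

/-- `d` is a `Φ`-pseudosemimetric: symmetric, vanishing on the diagonal, and satisfying
the generalized triangle inequality with triangle function `Φ`. -/
def IsPseudoSemimetricWith {X : Type*} (Φ : ℝ≥0 → ℝ≥0 → ℝ≥0) (d : X → X → ℝ≥0) : Prop :=
  (∀ x y, d x y = d y x) ∧ (∀ x, d x x = 0) ∧ ∀ x y z, d x y ≤ Φ (d x z) (d y z)

/-- Standing conditions on a continuous triangle function `Φ`. -/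
def Standing (Φ : ℝ≥0 → ℝ≥0 → ℝ≥0) : Prop :=
  Continuous (fun q : ℝ≥0 × ℝ≥0 => Φ q.1 q.2) ∧
  (∀ x y, Φ x y = Φ y x) ∧
  (∀ a, Monotone (Φ a)) ∧ (∀ b, Monotone fun a => Φ a b) ∧
  Φ 0 0 = 0 ∧
  (∀ x y z, Φ x (Φ y z) = Φ z (Φ x y)) ∧
  (∀ (a b c : ℝ≥0) (as bs cs : List ℝ≥0),
      (a ::ₘ (as : Multiset ℝ≥0)) ≤ (b ::ₘ (bs : Multiset ℝ≥0)) + (c ::ₘ (cs : Multiset ℝ≥0)) →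
      PhiStar Φ a as ≤ Φ (PhiStar Φ b bs) (PhiStar Φ c cs)) ∧
  (∀ a b, max a b ≤ Φ a b)

/-- The shortest-`Φ`-path function `d_Φ^w`. -/
noncomputable def dPhi {V : Type*} (G : SimpleGraph V) (Φ : ℝ≥0 → ℝ≥0 → ℝ≥0)
    (w : Sym2 V → ℝ≥0) (u v : V) : ℝ≥0 :=
  sInf {x | ∃ p : G.Walk u v, p.IsPath ∧ listPhi Φ (p.edges.map w) = x}

section
variable {Φ : ℝ≥0 → ℝ≥0 → ℝ≥0}

theorem phi_le_phi [Std.Commutative Φ] (hmono : ∀ a, Monotone (Φ a)) {a a' b b' : ℝ≥0}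
    (ha : a ≤ a') (hb : b ≤ b') : Φ a b ≤ Φ a' b' :=
  calc Φ a b ≤ Φ a b' := hmono a hb
    _ = Φ b' a := Std.Commutative.comm a b'
    _ ≤ Φ b' a' := hmono b' ha
    _ = Φ a' b' := Std.Commutative.comm b' a'

theorem le_phi_left (hmax : ∀ a b, max a b ≤ Φ a b) (a b : ℝ≥0) : a ≤ Φ a b :=
  (le_max_left a b).trans (hmax a b)

theorem le_phi_right (hmax : ∀ a b, max a b ≤ Φ a b) (a b : ℝ≥0) : b ≤ Φ a b :=
  (le_max_right a b).trans (hmax a b)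

theorem listPhi_cons_of_ne_nil {l : List ℝ≥0} (hl : l ≠ []) (a : ℝ≥0) :
    listPhi Φ (a :: l) = Φ a (listPhi Φ l) := by
  obtain ⟨b, t, rfl⟩ := List.exists_cons_of_ne_nil hl
  rfl

theorem listPhi_perm [Std.Commutative Φ] [Std.Associative Φ] {l l' : List ℝ≥0}
    (h : l.Perm l') : listPhi Φ l = listPhi Φ l' := by
  induction h with
  | nil => rfl
  | @cons a l₁ l₂ h ih =>
    rcases eq_or_ne l₁ [] with rfl | hne
    · rw [List.Perm.nil_eq h]
    · have hne₂ : l₂ ≠ [] := fun h₂ => hne (h₂ ▸ h).eq_nil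
      rw [listPhi_cons_of_ne_nil hne, listPhi_cons_of_ne_nil hne₂, ih]
  | swap a b l =>
    rcases eq_or_ne l [] with rfl | hne
    · exact Std.Commutative.comm b a
    · simp only [listPhi_cons_of_ne_nil hne, listPhi_cons_of_ne_nil (List.cons_ne_nil _ _)]
      ac_rfl
  | trans _ _ ih₁ ih₂ => exact ih₁.trans ih₂

theorem listPhi_le_cons (hmax : ∀ a b, max a b ≤ Φ a b) (a : ℝ≥0) (l : List ℝ≥0) :
    listPhi Φ l ≤ listPhi Φ (a :: l) := by
  rcases eq_or_ne l [] with rfl | hne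
  · exact zero_le
  · rw [listPhi_cons_of_ne_nil hne]
    exact le_phi_right hmax a _

theorem listPhi_le_append (hmax : ∀ a b, max a b ≤ Φ a b) (t l : List ℝ≥0) :
    listPhi Φ l ≤ listPhi Φ (t ++ l) := by
  induction t with
  | nil => exact le_rfl
  | cons a t ih => exact ih.trans (listPhi_le_cons hmax a _)

theorem listPhi_mono [Std.Commutative Φ] [Std.Associative Φ] (hmax : ∀ a b, max a b ≤ Φ a b)
    {l l' : List ℝ≥0} (h : (l : Multiset ℝ≥0) ≤ l') : listPhi Φ l ≤ listPhi Φ l' := by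
  obtain ⟨m, hm, hsub⟩ := Multiset.coe_le.1 h
  obtain ⟨t, ht⟩ := hsub.exists_perm_append
  rw [listPhi_perm (ht.trans ((hm.append_right t).trans List.perm_append_comm))]
  exact listPhi_le_append hmax t l

theorem le_listPhi_of_mem [Std.Commutative Φ] [Std.Associative Φ]
    (hmax : ∀ a b, max a b ≤ Φ a b) {a : ℝ≥0} {l : List ℝ≥0} (ha : a ∈ l) : a ≤ listPhi Φ l :=
  listPhi_mono (l := [a]) hmax (by simpa using ha)

theorem listPhi_le_phi_of_le_add [Std.Commutative Φ] [Std.Associative Φ]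
    (hmax : ∀ a b, max a b ≤ Φ a b)
    (hsub : ∀ (a b c : ℝ≥0) (as bs cs : List ℝ≥0),
      (a ::ₘ (as : Multiset ℝ≥0)) ≤ (b ::ₘ (bs : Multiset ℝ≥0)) + (c ::ₘ (cs : Multiset ℝ≥0)) →
      PhiStar Φ a as ≤ Φ (PhiStar Φ b bs) (PhiStar Φ c cs))
    {la lb lc : List ℝ≥0} (h : (la : Multiset ℝ≥0) ≤ lb + lc) :
    listPhi Φ la ≤ Φ (listPhi Φ lb) (listPhi Φ lc) := by
  match la, lb, lc, h with
  | [], _, _, _ => exact zero_le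
  | _ :: _, [], _, h => exact (listPhi_mono hmax (by simpa using h)).trans (le_phi_right hmax _ _)
  | _ :: _, _, [], h => exact (listPhi_mono hmax (by simpa using h)).trans (le_phi_left hmax _ _)
  | a :: as, b :: bs, c :: cs, h => exact hsub a b c as bs cs h

theorem le_phi_csInf (hcont : Continuous (fun q : ℝ≥0 × ℝ≥0 => Φ q.1 q.2))
    {S T : Set ℝ≥0} (hS : S.Nonempty) (hT : T.Nonempty) {d : ℝ≥0}
    (h : ∀ s ∈ S, ∀ t ∈ T, d ≤ Φ s t) : d ≤ Φ (sInf S) (sInf T) := by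
  have hclosed : IsClosed {q : ℝ≥0 × ℝ≥0 | d ≤ Φ q.1 q.2} := isClosed_le continuous_const hcont
  have hmem : (sInf S, sInf T) ∈ closure (S ×ˢ T) := by
    rw [closure_prod_eq]
    exact ⟨csInf_mem_closure hS (OrderBot.bddBelow S), csInf_mem_closure hT (OrderBot.bddBelow T)⟩
  exact closure_minimal (fun q hq => h q.1 hq.1 q.2 hq.2) hclosed hmem

open Classical in
noncomputable def extendAcrossClasses {X : Type*} (r : Setoid X) (Φ : ℝ≥0 → ℝ≥0 → ℝ≥0)
    (d : X → X → ℝ≥0) (x y : X) : ℝ≥0 :=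
  if r x y then d x y else Φ (d x (Quotient.mk r x).out) (d y (Quotient.mk r y).out)

section extendAcrossClasses
variable {X : Type*} {r : Setoid X} {d : X → X → ℝ≥0} {x y z : X}

theorem extendAcrossClasses_of_rel (h : r x y) : extendAcrossClasses r Φ d x y = d x y := by
  simp [extendAcrossClasses, h]

theorem extendAcrossClasses_of_not_rel (h : ¬r x y) :
    extendAcrossClasses r Φ d x y =
      Φ (d x (Quotient.mk r x).out) (d y (Quotient.mk r y).out) := by
  simp [extendAcrossClasses, h]

theorem le_phi_dist_out (htri : ∀ x y z, r x z → r y z → d x y ≤ Φ (d x z) (d y z))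
    (h : r x y) : d x y ≤ Φ (d x (Quotient.mk r x).out) (d y (Quotient.mk r y).out) := by
  have hout : (Quotient.mk r y).out = (Quotient.mk r x).out :=
    congrArg Quotient.out (Quotient.sound (r.symm' h))
  have hx : r x (Quotient.mk r x).out := r.symm' (Quotient.mk_out x)
  rw [hout]
  exact htri x y _ hx (r.trans' (r.symm' h) hx)

theorem dist_out_le_phi (hsymm : ∀ x y, r x y → d x y = d y x)
    (htri : ∀ x y z, r x z → r y z → d x y ≤ Φ (d x z) (d y z)) (h : r x z) :
    d x (Quotient.mk r x).out ≤ Φ (d x z) (d z (Quotient.mk r z).out) := by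
  have hout : (Quotient.mk r x).out = (Quotient.mk r z).out :=
    congrArg Quotient.out (Quotient.sound h)
  have hz : r (Quotient.mk r z).out z := Quotient.mk_out z
  rw [hout, ← hsymm _ _ hz]
  exact htri x _ z h hz

theorem extendAcrossClasses_comm [Std.Commutative Φ] (hsymm : ∀ x y, r x y → d x y = d y x)
    (x y : X) : extendAcrossClasses r Φ d x y = extendAcrossClasses r Φ d y x := by
  by_cases h : r x y
  · rw [extendAcrossClasses_of_rel h, extendAcrossClasses_of_rel (r.symm' h), hsymm x y h]
  · rw [extendAcrossClasses_of_not_rel h, extendAcrossClasses_of_not_rel (mt r.symm' h),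
      Std.Commutative.comm (op := Φ)]

theorem extendAcrossClasses_le_of_rel_of_not_rel [Std.Commutative Φ] [Std.Associative Φ]
    (hmono : ∀ a, Monotone (Φ a)) (hsymm : ∀ x y, r x y → d x y = d y x)
    (htri : ∀ x y z, r x z → r y z → d x y ≤ Φ (d x z) (d y z)) (hxz : r x z) (hyz : ¬r y z) :
    extendAcrossClasses r Φ d x y ≤
      Φ (extendAcrossClasses r Φ d x z) (extendAcrossClasses r Φ d y z) := by
  have hxy : ¬r x y := fun h => hyz (r.trans' (r.symm' h) hxz)
  rw [extendAcrossClasses_of_not_rel hxy, extendAcrossClasses_of_rel hxz,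
    extendAcrossClasses_of_not_rel hyz]
  calc Φ (d x (Quotient.mk r x).out) (d y (Quotient.mk r y).out)
      ≤ Φ (Φ (d x z) (d z (Quotient.mk r z).out)) (d y (Quotient.mk r y).out) :=
        phi_le_phi hmono (dist_out_le_phi hsymm htri hxz) le_rfl
    _ = Φ (d x z) (Φ (d y (Quotient.mk r y).out) (d z (Quotient.mk r z).out)) := by ac_rfl

theorem extendAcrossClasses_le_of_not_rel [Std.Commutative Φ] (hmono : ∀ a, Monotone (Φ a))
    (hmax : ∀ a b, max a b ≤ Φ a b) (htri : ∀ x y z, r x z → r y z → d x y ≤ Φ (d x z) (d y z))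
    (hxz : ¬r x z) (hyz : ¬r y z) :
    extendAcrossClasses r Φ d x y ≤
      Φ (extendAcrossClasses r Φ d x z) (extendAcrossClasses r Φ d y z) := by
  have hgrow : ∀ a b, Φ a b ≤ Φ (Φ a (d z (Quotient.mk r z).out)) (Φ b (d z (Quotient.mk r z).out)) :=
    fun a b => phi_le_phi hmono (le_phi_left hmax _ _) (le_phi_left hmax _ _)
  rw [extendAcrossClasses_of_not_rel hxz, extendAcrossClasses_of_not_rel hyz]
  by_cases hxy : r x y
  · rw [extendAcrossClasses_of_rel hxy]
    exact (le_phi_dist_out htri hxy).trans (hgrow _ _)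
  · rw [extendAcrossClasses_of_not_rel hxy]
    exact hgrow _ _

theorem isPseudoSemimetricWith_extendAcrossClasses [Std.Commutative Φ] [Std.Associative Φ]
    (hmono : ∀ a, Monotone (Φ a)) (hmax : ∀ a b, max a b ≤ Φ a b)
    (hsymm : ∀ x y, r x y → d x y = d y x) (hself : ∀ x, d x x = 0)
    (htri : ∀ x y z, r x z → r y z → d x y ≤ Φ (d x z) (d y z)) :
    IsPseudoSemimetricWith Φ (extendAcrossClasses r Φ d) := by
  refine ⟨extendAcrossClasses_comm hsymm,
    fun x => by rw [extendAcrossClasses_of_rel (r.refl' x), hself], fun x y z => ?_⟩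
  by_cases hxz : r x z <;> by_cases hyz : r y z
  · rw [extendAcrossClasses_of_rel (r.trans' hxz (r.symm' hyz)), extendAcrossClasses_of_rel hxz,
      extendAcrossClasses_of_rel hyz]
    exact htri x y z hxz hyz
  · exact extendAcrossClasses_le_of_rel_of_not_rel hmono hsymm htri hxz hyz
  · rw [extendAcrossClasses_comm hsymm x y, Std.Commutative.comm (op := Φ)]
    exact extendAcrossClasses_le_of_rel_of_not_rel hmono hsymm htri hyz hxz
  · exact extendAcrossClasses_le_of_not_rel hmono hmax htri hxz hyz

end extendAcrossClasses

section dPhi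
variable {V : Type*} {G : SimpleGraph V} {w : Sym2 V → ℝ≥0}

theorem dPhi_le_of_isPath {u v : V} (p : G.Walk u v) (hp : p.IsPath) :
    dPhi G Φ w u v ≤ listPhi Φ (p.edges.map w) :=
  csInf_le (OrderBot.bddBelow _) ⟨p, hp, rfl⟩

theorem SimpleGraph.Reachable.nonempty_pathPhiWeights {u v : V} (h : G.Reachable u v) :
    {x | ∃ p : G.Walk u v, p.IsPath ∧ listPhi Φ (p.edges.map w) = x}.Nonempty := by
  classical
  obtain ⟨p⟩ := h
  exact ⟨_, p.bypass, p.bypass_isPath, rfl⟩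

theorem dPhi_self (u : V) : dPhi G Φ w u u = 0 :=
  le_antisymm (dPhi_le_of_isPath Walk.nil Walk.IsPath.nil) zero_le

theorem dPhi_comm [Std.Commutative Φ] [Std.Associative Φ] (u v : V) :
    dPhi G Φ w u v = dPhi G Φ w v u := by
  have hrev : ∀ u v : V, {x | ∃ p : G.Walk u v, p.IsPath ∧ listPhi Φ (p.edges.map w) = x} ⊆
      {x | ∃ p : G.Walk v u, p.IsPath ∧ listPhi Φ (p.edges.map w) = x} := by
    rintro u v _ ⟨p, hp, rfl⟩
    refine ⟨p.reverse, hp.reverse, ?_⟩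
    rw [Walk.edges_reverse, List.map_reverse]
    exact listPhi_perm (List.reverse_perm _)
  exact congrArg sInf ((hrev u v).antisymm (hrev v u))

theorem dPhi_le_phi [Std.Commutative Φ] [Std.Associative Φ]
    (hcont : Continuous (fun q : ℝ≥0 × ℝ≥0 => Φ q.1 q.2)) (hmax : ∀ a b, max a b ≤ Φ a b)
    (hsub : ∀ (a b c : ℝ≥0) (as bs cs : List ℝ≥0),
      (a ::ₘ (as : Multiset ℝ≥0)) ≤ (b ::ₘ (bs : Multiset ℝ≥0)) + (c ::ₘ (cs : Multiset ℝ≥0)) →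
      PhiStar Φ a as ≤ Φ (PhiStar Φ b bs) (PhiStar Φ c cs))
    {x y z : V} (hxz : G.Reachable x z) (hyz : G.Reachable y z) :
    dPhi G Φ w x y ≤ Φ (dPhi G Φ w x z) (dPhi G Φ w y z) := by
  classical
  refine le_phi_csInf hcont hxz.nonempty_pathPhiWeights hyz.nonempty_pathPhiWeights ?_
  rintro _ ⟨p, -, rfl⟩ _ ⟨q, -, rfl⟩
  let r := p.append q.reverse
  refine (dPhi_le_of_isPath r.bypass r.bypass_isPath).trans
    (listPhi_le_phi_of_le_add hmax hsub ?_)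
  calc ((r.bypass.edges.map w : List ℝ≥0) : Multiset ℝ≥0) ≤ (r.edges.map w : List ℝ≥0) :=
        Multiset.coe_le.2 (r.edges_bypass_sublist_edges.map w).subperm
    _ = (p.edges.map w : List ℝ≥0) + (q.edges.map w : List ℝ≥0) := by
        simp only [r, Walk.edges_append, Walk.edges_reverse, List.map_append, List.map_reverse,
          ← Multiset.coe_add, Multiset.coe_reverse]

theorem dPhi_of_adj [Std.Commutative Φ] [Std.Associative Φ] (hmax : ∀ a b, max a b ≤ Φ a b)
    (hcyc : ∀ (a b : V) (h : G.Adj a b) (p : G.Walk b a),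
      (Walk.cons h p).IsCycle → w s(a, b) ≤ listPhi Φ (p.edges.map w))
    {u v : V} (h : G.Adj u v) : dPhi G Φ w u v = w s(u, v) := by
  have hedge : (Walk.cons h Walk.nil).IsPath := by simp [h.ne]
  refine le_antisymm (dPhi_le_of_isPath _ hedge) (le_csInf ⟨_, _, hedge, rfl⟩ ?_)
  rintro _ ⟨p, hp, rfl⟩
  by_cases he : s(u, v) ∈ p.edges
  · exact le_listPhi_of_mem hmax (List.mem_map_of_mem he)
  · have hc : (Walk.cons h.symm p).IsCycle :=
      Walk.cons_isCycle_iff _ _ |>.2 ⟨hp, by rwa [Sym2.eq_swap]⟩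
    simpa only [Sym2.eq_swap] using hcyc v u h.symm p hc

end dPhi

end

/-- if for every cycle `C ⊆ G` and every edge `e ∈ E(C)` the inequality
`w(e) ≤ w_Φ(C∖e)` holds, then `w` is `Φ`-pseudosemimetrizable. -/
theorem stmt_9 {V : Type*} (G : SimpleGraph V) (w : Sym2 V → ℝ≥0)
    (Φ : ℝ≥0 → ℝ≥0 → ℝ≥0) (hΦ : Standing Φ)
    (hcyc : ∀ (a b : V) (h : G.Adj a b) (p : G.Walk b a),
      (SimpleGraph.Walk.cons h p).IsCycle →
      w s(a, b) ≤ listPhi Φ (p.edges.map w)) :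
    ∃ d : V → V → ℝ≥0, IsPseudoSemimetricWith Φ d ∧
      ∀ u v, G.Adj u v → d u v = w s(u, v) := by
  obtain ⟨hcont, hcomm, hmono, -, -, hrot, hsub, hmax⟩ := hΦ
  have : Std.Commutative Φ := ⟨hcomm⟩
  have : Std.Associative Φ := ⟨fun a b c => ((hrot a b c).trans (hcomm _ _)).symm⟩
  refine ⟨extendAcrossClasses G.reachableSetoid Φ (dPhi G Φ w),
    isPseudoSemimetricWith_extendAcrossClasses hmono hmax (fun u v _ => dPhi_comm u v) dPhi_self
      (fun _ _ _ hxz hyz => dPhi_le_phi hcont hmax hsub hxz hyz),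
    fun u v h => ?_⟩
  rw [extendAcrossClasses_of_rel h.reachable, dPhi_of_adj hmax hcyc h]
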